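/- For d ≥ 2 and γ ∈ (0,1), the Lebesgue volume of the γ-hyperspherical sector C△_γ(w) (for any nonzero w ∈ R^d) equals (Vol(B)/2)·I_{1-γ²}((d-1)/2, 1/2), where Vol(B) = π^(d/2)/Γ(d/2+1). -/

import Mathlib

/-- The incomplete beta function `B(x, a, b) = ∫₀ˣ t^(a-1) (1-t)^(b-1) dt`. -/
noncomputable def incBeta (x a b : ℝ) : ℝ :=
  ∫ t in (0:ℝ)..x, t ^ (a - 1) * (1 - t) ^ (b - 1)

/-- The regularized incomplete beta function `I_x(a,b) = B(x,a,b) / B(1,a,b)`. -/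
noncomputable def regIncBeta (x a b : ℝ) : ℝ := incBeta x a b / incBeta 1 a b

/-- The `γ`-hyperspherical sector in direction `w` (excluding `0`). -/
def sector (d : ℕ) (γ : ℝ) (w : EuclideanSpace ℝ (Fin d)) : Set (EuclideanSpace ℝ (Fin d)) :=
  {x | ‖x‖ ≤ 1 ∧ x ≠ 0 ∧ γ ≤ (inner ℝ x w : ℝ) / (‖x‖ * ‖w‖)}

/-!
Since the sector only depends on the direction of `w` and a reflection carrying one unit vector
to another preserves volume, we may take `w = e₀`. Slicing at `x₀ = t` then gives a
`(d-1)`-ball of radius `min √(1 - t²) (t √(1 - γ²) / γ)`: a cone for `t ≤ γ`, contributing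
`(1 - γ²)^((d-1)/2) γ / d` after integration, and a spherical cap for `t ≥ γ`, which the
substitution `t = √(1 - u)` turns into `½ B(1 - γ², (d+1)/2, ½)`. The recurrence
`(a + b) B(x, a+1, b) = a B(x, a, b) - x^a (1-x)^b` merges the two pieces into
`(d-1)/(2d) B(1 - γ², (d-1)/2, ½)`, and `B(1, a, b) = Γ(a) Γ(b) / Γ(a+b)` identifies
`(d-1)/d · B(1, (d-1)/2, ½)` as the ratio of the volumes of the unit `d`- and `(d-1)`-balls.
-/

open MeasureTheory Set Real

lemma sqrt_pow_eq_rpow {x : ℝ} (hx : 0 ≤ x) (n : ℕ) : √x ^ n = x ^ ((n : ℝ) / 2) := by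
  rw [sqrt_eq_rpow, ← rpow_mul_natCast hx, one_div_mul_eq_div]

lemma intervalIntegrable_rpow_mul_one_sub_rpow {p q : ℝ} (hp : -1 < p) (hq : -1 < q)
    {x : ℝ} (hx₀ : 0 ≤ x) (hx₁ : x ≤ 1) :
    IntervalIntegrable (fun u => u ^ p * (1 - u) ^ q) volume 0 x := by
  have left : IntervalIntegrable (fun u => u ^ p * (1 - u) ^ q) volume 0 (1 / 2) := by
    refine (intervalIntegral.intervalIntegrable_rpow' hp).mul_continuousOn fun u hu => ?_
    rw [uIcc_of_le (by norm_num)] at hu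
    exact ((continuousAt_rpow_const _ _ (Or.inl (by linarith [hu.2]))).comp
      (by fun_prop : ContinuousAt (fun u : ℝ => 1 - u) u)).continuousWithinAt
  have right : IntervalIntegrable (fun u => u ^ p * (1 - u) ^ q) volume (1 / 2) 1 := by
    have hq' : IntervalIntegrable (fun u => (1 - u) ^ q) volume (1 / 2) 1 := by
      have := (intervalIntegral.intervalIntegrable_rpow' (a := 1 / 2) (b := 0) hq).comp_sub_left 1
      norm_num at this ⊢
      exact this
    refine hq'.continuousOn_mul fun u hu => ?_
    rw [uIcc_of_le (by norm_num)] at hu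
    exact (continuousAt_rpow_const _ _ (Or.inl (by linarith [hu.1]))).continuousWithinAt
  refine (left.trans right).mono_set ?_
  rw [uIcc_of_le hx₀, uIcc_of_le zero_le_one]
  exact Icc_subset_Icc le_rfl hx₁

lemma incBeta_nonneg {x : ℝ} (hx₀ : 0 ≤ x) (hx₁ : x ≤ 1) (a b : ℝ) : 0 ≤ incBeta x a b :=
  intervalIntegral.integral_nonneg hx₀ fun u hu =>
    mul_nonneg (rpow_nonneg hu.1 _) (rpow_nonneg (by linarith [hu.2]) _)

lemma ofReal_incBeta_one (a b : ℝ) : (incBeta 1 a b : ℂ) = Complex.betaIntegral a b := by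
  rw [incBeta, Complex.betaIntegral, ← intervalIntegral.integral_ofReal]
  refine intervalIntegral.integral_congr fun t ht => ?_
  rw [uIcc_of_le zero_le_one] at ht
  push_cast
  rw [Complex.ofReal_cpow ht.1, Complex.ofReal_cpow (by linarith [ht.2])]
  push_cast
  ring

lemma incBeta_one {a b : ℝ} (ha : 0 < a) (hb : 0 < b) :
    incBeta 1 a b = Gamma a * Gamma b / Gamma (a + b) := by
  have h := Complex.betaIntegral_eq_Gamma_mul_div a b (by simpa) (by simpa)
  rw [← ofReal_incBeta_one, ← Complex.ofReal_add, Complex.Gamma_ofReal, Complex.Gamma_ofReal,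
    Complex.Gamma_ofReal] at h
  exact_mod_cast h

lemma incBeta_add_one_left {a b x : ℝ} (ha : 0 < a) (hb : 0 < b) (hx₀ : 0 ≤ x) (hx₁ : x ≤ 1) :
    (a + b) * incBeta x (a + 1) b = a * incBeta x a b - x ^ a * (1 - x) ^ b := by
  have hia : IntervalIntegrable (fun u => u ^ (a - 1) * (1 - u) ^ (b - 1)) volume 0 x :=
    intervalIntegrable_rpow_mul_one_sub_rpow (by linarith) (by linarith) hx₀ hx₁
  have hib : IntervalIntegrable (fun u => u ^ a * (1 - u) ^ (b - 1)) volume 0 x :=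
    intervalIntegrable_rpow_mul_one_sub_rpow (by linarith) (by linarith) hx₀ hx₁
  have hcont : Continuous fun u : ℝ => u ^ a * (1 - u) ^ b :=
    (continuous_rpow_const ha.le).mul
      ((continuous_rpow_const hb.le).comp (continuous_const.sub continuous_id))
  have hderiv : ∀ u ∈ Ioo 0 x, HasDerivAt (fun u : ℝ => u ^ a * (1 - u) ^ b)
      (a * (u ^ (a - 1) * (1 - u) ^ (b - 1)) - (a + b) * (u ^ a * (1 - u) ^ (b - 1))) u := by
    intro u hu
    have hu₀ : u ≠ 0 := hu.1.ne'
    have hu₁ : 1 - u ≠ 0 := by linarith [hu.2]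
    have hsub := ((hasDerivAt_id u).const_sub 1).rpow_const (p := b) (Or.inl hu₁)
    refine ((hasDerivAt_rpow_const (p := a) (Or.inl hu₀)).mul hsub).congr_deriv ?_
    have hua : u ^ a = u ^ (a - 1) * u := by rw [← rpow_add_one hu₀, sub_add_cancel]
    have hub : (1 - u) ^ b = (1 - u) ^ (b - 1) * (1 - u) := by
      rw [← rpow_add_one hu₁, sub_add_cancel]
    rw [id, hua, hub]
    ring
  have hFTC := intervalIntegral.integral_eq_sub_of_hasDerivAt_of_le hx₀ hcont.continuousOn hderiv
    ((hia.const_mul a).sub (hib.const_mul (a + b)))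
  rw [intervalIntegral.integral_sub (hia.const_mul a) (hib.const_mul (a + b)),
    intervalIntegral.integral_const_mul, intervalIntegral.integral_const_mul, zero_rpow ha.ne',
    zero_mul, sub_zero] at hFTC
  have hshift : incBeta x (a + 1) b = ∫ u in (0:ℝ)..x, u ^ a * (1 - u) ^ (b - 1) := by
    simp only [incBeta, add_sub_cancel_right]
  rw [hshift, incBeta]
  linarith

lemma integral_sqrt_one_sub_sq_pow (n : ℕ) {γ : ℝ} (hγ₀ : 0 ≤ γ) (hγ₁ : γ ≤ 1) :
    ∫ t in γ..1, √(1 - t ^ 2) ^ n = 1 / 2 * incBeta (1 - γ ^ 2) (n / 2 + 1) (1 / 2) := by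
  have hx : 0 ≤ 1 - γ ^ 2 := by nlinarith
  have hderiv : ∀ u ∈ Ioo (min 0 (1 - γ ^ 2)) (max 0 (1 - γ ^ 2)),
      HasDerivAt (fun u => √(1 - u)) (-(2 * √(1 - u))⁻¹) u := by
    intro u hu
    rw [min_eq_left hx, max_eq_right hx] at hu
    have hu₁ : 1 - u ≠ 0 := by nlinarith [hu.2]
    simpa [div_eq_inv_mul] using ((hasDerivAt_id u).const_sub 1).sqrt hu₁
  have hsubst := intervalIntegral.integral_deriv_smul_comp_of_deriv_nonpos (f := fun u => √(1 - u))
    (g := fun t => √(1 - t ^ 2) ^ n) (by fun_prop) hderiv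
    fun u _ => by simp only [neg_nonpos, inv_nonneg]; positivity
  simp only [Function.comp_apply, sub_zero, sqrt_one, sub_sub_cancel, sqrt_sq hγ₀,
    smul_eq_mul] at hsubst
  rw [intervalIntegral.integral_symm, ← hsubst, ← intervalIntegral.integral_neg, incBeta,
    ← intervalIntegral.integral_const_mul]
  refine intervalIntegral.integral_congr fun u hu => ?_
  rw [uIcc_of_le hx] at hu
  have hu₁ : 0 ≤ 1 - u := by nlinarith [hu.2]
  have hsqrt : √(1 - √(1 - u) ^ 2) = √u := by rw [sq_sqrt hu₁, sub_sub_cancel]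
  have hinv : (1 - u) ^ ((1:ℝ) / 2 - 1) = (√(1 - u))⁻¹ := by
    rw [show (1:ℝ) / 2 - 1 = -(1 / 2) by norm_num, rpow_neg hu₁, sqrt_eq_rpow]
  rw [hsqrt, sqrt_pow_eq_rpow hu.1, add_sub_cancel_right, hinv]
  ring

section Sector

variable {d : ℕ} (γ : ℝ)

lemma sector_smul_of_pos (w : EuclideanSpace ℝ (Fin d)) {c : ℝ} (hc : 0 < c) :
    sector d γ (c • w) = sector d γ w := by
  ext x
  simp only [sector, mem_ofPred_eq, inner_smul_right, norm_smul, norm_of_nonneg hc.le]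
  rw [mul_left_comm ‖x‖, mul_div_mul_left _ _ hc.ne']

lemma preimage_sector_linearIsometryEquiv (w : EuclideanSpace ℝ (Fin d))
    (R : EuclideanSpace ℝ (Fin d) ≃ₗᵢ[ℝ] EuclideanSpace ℝ (Fin d)) :
    R ⁻¹' sector d γ (R w) = sector d γ w := by
  ext x
  simp [sector, R.norm_map, R.inner_map_map]

lemma measurableSet_sector (w : EuclideanSpace ℝ (Fin d)) : MeasurableSet (sector d γ w) :=
  (measurableSet_le measurable_norm measurable_const).inter <|
    (measurableSet_singleton 0).compl.inter <| measurableSet_le measurable_const <|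
      (continuous_id.inner continuous_const).measurable.div (measurable_norm.mul_const _)

lemma volume_sector_eq_of_ne_zero {v w : EuclideanSpace ℝ (Fin d)} (hv : v ≠ 0) (hw : w ≠ 0) :
    volume (sector d γ v) = volume (sector d γ w) := by
  set R := Submodule.reflection (ℝ ∙ (‖v‖⁻¹ • v - ‖w‖⁻¹ • w))ᗮ
  have hR : R (‖v‖⁻¹ • v) = ‖w‖⁻¹ • w :=
    Submodule.reflection_sub (by simp [norm_smul, hv, hw])
  rw [← sector_smul_of_pos γ v (inv_pos.2 (norm_pos_iff.2 hv)),
    ← sector_smul_of_pos γ w (inv_pos.2 (norm_pos_iff.2 hw)), ← hR,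
    ← preimage_sector_linearIsometryEquiv γ _ R,
    R.measurePreserving.measure_preimage (measurableSet_sector γ _).nullMeasurableSet]

end Sector

noncomputable def unitBallVolume (n : ℕ) : ℝ := √π ^ n / Gamma (n / 2 + 1)

lemma volume_setOf_sum_sq_le_sq {n : ℕ} (hn : 0 < n) {r : ℝ} (hr : 0 ≤ r) :
    volume {y : Fin n → ℝ | ∑ i, y i ^ 2 ≤ r ^ 2} =
      ENNReal.ofReal r ^ n * ENNReal.ofReal (unitBallVolume n) := by
  have : Nonempty (Fin n) := ⟨⟨0, hn⟩⟩
  have hball : {y : Fin n → ℝ | ∑ i, y i ^ 2 ≤ r ^ 2} =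
      WithLp.toLp 2 ⁻¹' Metric.closedBall (0 : EuclideanSpace ℝ (Fin n)) r := by
    ext y
    rw [mem_preimage, mem_closedBall_zero_iff, ← sq_le_sq₀ (norm_nonneg _) hr,
      EuclideanSpace.real_norm_sq_eq]
    rfl
  rw [hball, (PiLp.volume_preserving_toLp (Fin n)).measure_preimage
    measurableSet_closedBall.nullMeasurableSet, EuclideanSpace.volume_closedBall, Fintype.card_fin,
    unitBallVolume]

def solidOfRevolution (n : ℕ) (I : Set ℝ) (r : ℝ → ℝ) : Set (EuclideanSpace ℝ (Fin (n + 1))) :=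
  {x | x 0 ∈ I ∧ ∑ j : Fin n, x j.succ ^ 2 ≤ r (x 0) ^ 2}

lemma volume_solidOfRevolution {n : ℕ} (hn : 0 < n) {I : Set ℝ} (hI : MeasurableSet I)
    {r : ℝ → ℝ} (hr : Measurable r) (hr₀ : ∀ t ∈ I, 0 ≤ r t) :
    volume (solidOfRevolution n I r) =
      (∫⁻ t in I, ENNReal.ofReal (r t) ^ n) * ENNReal.ofReal (unitBallVolume n) := by
  set T : Set (ℝ × (Fin n → ℝ)) := {p | p.1 ∈ I ∧ ∑ j, p.2 j ^ 2 ≤ r p.1 ^ 2}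
  have hT : MeasurableSet T :=
    (measurable_fst hI).inter <| measurableSet_le
      (Finset.measurable_sum _ fun j _ =>
        ((measurable_pi_apply j).comp measurable_snd).pow_const 2)
      ((hr.comp measurable_fst).pow_const 2)
  have hsplit := (volume_preserving_piFinSuccAbove (fun _ : Fin (n + 1) => ℝ) 0).comp
    (PiLp.volume_preserving_ofLp (Fin (n + 1)))
  have hslice : ∀ t, volume (Prod.mk t ⁻¹' T) =
      I.indicator (fun t => ENNReal.ofReal (r t) ^ n * ENNReal.ofReal (unitBallVolume n)) t := by
    intro t
    by_cases ht : t ∈ I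
    · simp only [T, preimage_ofPred_eq, ht, true_and, indicator_of_mem ht]
      exact volume_setOf_sum_sq_le_sq hn (hr₀ t ht)
    · simp [T, ht]
  change volume ((MeasurableEquiv.piFinSuccAbove (fun _ => ℝ) 0 ∘ WithLp.ofLp) ⁻¹' T) = _
  rw [hsplit.measure_preimage hT.nullMeasurableSet, Measure.volume_eq_prod, Measure.prod_apply hT,
    lintegral_congr hslice, lintegral_indicator hI, lintegral_mul_const _ (by fun_prop)]

lemma volume_solidOfRevolution_Ioc {n : ℕ} (hn : 0 < n) {a b : ℝ} (hab : a ≤ b)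
    {r : ℝ → ℝ} (hr : Continuous r) (hr₀ : ∀ t ∈ Ioc a b, 0 ≤ r t) :
    volume (solidOfRevolution n (Ioc a b) r) =
      ENNReal.ofReal ((∫ t in a..b, r t ^ n) * unitBallVolume n) := by
  have hpow : ∀ t ∈ Ioc a b, ENNReal.ofReal (r t) ^ n = ENNReal.ofReal (r t ^ n) :=
    fun t ht => (ENNReal.ofReal_pow (hr₀ t ht) n).symm
  have hnonneg : ∀ t ∈ Ioc a b, 0 ≤ r t ^ n := fun t ht => pow_nonneg (hr₀ t ht) n
  rw [volume_solidOfRevolution hn measurableSet_Ioc hr.measurable hr₀,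
    setLIntegral_congr_fun measurableSet_Ioc hpow, intervalIntegral.integral_of_le hab,
    ← ofReal_integral_eq_lintegral_ofReal (f := fun t => r t ^ n)
      ((hr.pow n).integrableOn_Icc.mono_set Ioc_subset_Icc_self)
      ((ae_restrict_iff' measurableSet_Ioc).2 (ae_of_all _ hnonneg)),
    ← ENNReal.ofReal_mul (setIntegral_nonneg measurableSet_Ioc hnonneg)]

noncomputable def sectorRadius (γ t : ℝ) : ℝ := min √(1 - t ^ 2) (√(1 - γ ^ 2) / γ * t)

lemma continuous_sectorRadius (γ : ℝ) : Continuous (sectorRadius γ) := by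
  unfold sectorRadius
  fun_prop

lemma sectorRadius_nonneg {γ t : ℝ} (hγ₀ : 0 < γ) (ht : 0 ≤ t) : 0 ≤ sectorRadius γ t :=
  le_min (sqrt_nonneg _) (by positivity)

section SectorRadius

variable {γ t : ℝ} (hγ₀ : 0 < γ) (hγ₁ : γ ≤ 1)
include hγ₀ hγ₁

lemma sectorRadius_of_le (ht₀ : 0 ≤ t) (ht : t ≤ γ) :
    sectorRadius γ t = √(1 - γ ^ 2) / γ * t := by
  refine min_eq_right ((le_sqrt (by positivity) (by nlinarith)).2 ?_)
  rw [mul_pow, div_pow, sq_sqrt (by nlinarith), div_mul_eq_mul_div, div_le_iff₀ (by positivity)]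
  nlinarith

lemma sectorRadius_of_ge (ht : γ ≤ t) : sectorRadius γ t = √(1 - t ^ 2) := by
  refine min_eq_left ((sqrt_le_left (mul_nonneg (by positivity) (by linarith))).2 ?_)
  rw [mul_pow, div_pow, sq_sqrt (by nlinarith), div_mul_eq_mul_div, le_div_iff₀ (by positivity)]
  nlinarith

lemma le_sectorRadius_sq_iff {q : ℝ} (ht₀ : 0 ≤ t) (ht₁ : t ≤ 1) :
    q ≤ sectorRadius γ t ^ 2 ↔ q ≤ 1 - t ^ 2 ∧ γ ^ 2 * q ≤ (1 - γ ^ 2) * t ^ 2 := by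
  rw [← sqrt_le_left (sectorRadius_nonneg hγ₀ ht₀), sectorRadius, le_min_iff,
    sqrt_le_left (sqrt_nonneg _), sqrt_le_left (by positivity), sq_sqrt (by nlinarith), mul_pow,
    div_pow, sq_sqrt (by nlinarith), div_mul_eq_mul_div, le_div_iff₀ (by positivity), mul_comm q]

end SectorRadius

lemma sector_single_zero_eq_solidOfRevolution {n : ℕ} {γ : ℝ} (hγ₀ : 0 < γ) (hγ₁ : γ ≤ 1) :
    sector (n + 1) γ (EuclideanSpace.single 0 1) =
      solidOfRevolution n (Ioc 0 1) (sectorRadius γ) := by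
  ext x
  simp only [sector, solidOfRevolution, mem_ofPred_eq, EuclideanSpace.inner_single_right,
    PiLp.norm_single, mem_Ioc, norm_one, one_mul, mul_one, conj_trivial]
  set t := x 0
  have hnorm : ‖x‖ ^ 2 = t ^ 2 + ∑ j : Fin n, x j.succ ^ 2 := by
    rw [EuclideanSpace.real_norm_sq_eq, Fin.sum_univ_succ]
  have hq : 0 ≤ ∑ j : Fin n, x j.succ ^ 2 := by positivity
  constructor
  · rintro ⟨hx₁, hx, hγx⟩
    have hxpos : 0 < ‖x‖ := norm_pos_iff.2 hx
    have hγt : γ * ‖x‖ ≤ t := (le_div_iff₀ hxpos).1 hγx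
    have hγt' : (γ * ‖x‖) ^ 2 ≤ t ^ 2 := pow_le_pow_left₀ (by positivity) hγt 2
    have ht₀ : 0 < t := (mul_pos hγ₀ hxpos).trans_le hγt
    have ht₁ : t ≤ 1 := by nlinarith
    exact ⟨⟨ht₀, ht₁⟩, (le_sectorRadius_sq_iff hγ₀ hγ₁ ht₀.le ht₁).2 ⟨by nlinarith, by nlinarith⟩⟩
  · rintro ⟨⟨ht₀, ht₁⟩, hr⟩
    obtain ⟨hcap, hcone⟩ := (le_sectorRadius_sq_iff hγ₀ hγ₁ ht₀.le ht₁).1 hr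
    have hx : x ≠ 0 := by
      rintro rfl
      exact ht₀.ne' rfl
    have hxpos : 0 < ‖x‖ := norm_pos_iff.2 hx
    refine ⟨by nlinarith, hx, (le_div_iff₀ hxpos).2 ?_⟩
    exact (sq_le_sq₀ (by positivity) ht₀.le).1 (by nlinarith)

lemma integral_sectorRadius_pow {n : ℕ} (hn : 0 < n) {γ : ℝ} (hγ₀ : 0 < γ) (hγ₁ : γ ≤ 1) :
    ∫ t in (0:ℝ)..1, sectorRadius γ t ^ n =
      n / (2 * (n + 1)) * incBeta (1 - γ ^ 2) (n / 2) (1 / 2) := by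
  have hcont : Continuous fun t => sectorRadius γ t ^ n := (continuous_sectorRadius γ).pow n
  have hcone : ∫ t in (0:ℝ)..γ, sectorRadius γ t ^ n = √(1 - γ ^ 2) ^ n * γ / (n + 1) :=
    calc ∫ t in (0:ℝ)..γ, sectorRadius γ t ^ n = ∫ t in (0:ℝ)..γ, (√(1 - γ ^ 2) / γ) ^ n * t ^ n :=
          intervalIntegral.integral_congr fun t ht => by
            rw [uIcc_of_le hγ₀.le] at ht
            rw [sectorRadius_of_le hγ₀ hγ₁ ht.1 ht.2, mul_pow]
      _ = √(1 - γ ^ 2) ^ n * γ / (n + 1) := by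
          rw [intervalIntegral.integral_const_mul, integral_pow, div_pow]
          field_simp
          ring
  have hcap : ∫ t in γ..1, sectorRadius γ t ^ n =
      1 / 2 * incBeta (1 - γ ^ 2) (n / 2 + 1) (1 / 2) :=
    calc ∫ t in γ..1, sectorRadius γ t ^ n = ∫ t in γ..1, √(1 - t ^ 2) ^ n :=
          intervalIntegral.integral_congr fun t ht => by
            rw [uIcc_of_le hγ₁] at ht
            rw [sectorRadius_of_ge hγ₀ hγ₁ ht.1]
      _ = _ := integral_sqrt_one_sub_sq_pow n hγ₀.le hγ₁
  have hrec := incBeta_add_one_left (a := n / 2) (b := 1 / 2) (x := 1 - γ ^ 2) (by positivity)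
    (by norm_num) (by nlinarith) (by nlinarith)
  rw [sub_sub_cancel, ← sqrt_eq_rpow, sqrt_sq hγ₀.le, ← sqrt_pow_eq_rpow (by nlinarith)] at hrec
  rw [← intervalIntegral.integral_add_adjacent_intervals (b := γ) (hcont.intervalIntegrable _ _)
    (hcont.intervalIntegrable _ _), hcone, hcap]
  set B := incBeta (1 - γ ^ 2) (n / 2) (1 / 2)
  set B₁ := incBeta (1 - γ ^ 2) (n / 2 + 1) (1 / 2)
  have hB₁ : B₁ = (n * B - 2 * √(1 - γ ^ 2) ^ n * γ) / (n + 1) := by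
    rw [eq_div_iff (by positivity)]
    linear_combination 2 * hrec
  rw [hB₁]
  field_simp
  ring

lemma volume_sector_single_zero {n : ℕ} (hn : 0 < n) {γ : ℝ} (hγ₀ : 0 < γ) (hγ₁ : γ ≤ 1) :
    volume (sector (n + 1) γ (EuclideanSpace.single 0 1)) =
      ENNReal.ofReal
        (n / (2 * (n + 1)) * incBeta (1 - γ ^ 2) (n / 2) (1 / 2) * unitBallVolume n) := by
  rw [sector_single_zero_eq_solidOfRevolution hγ₀ hγ₁, volume_solidOfRevolution_Ioc hn zero_le_one
    (continuous_sectorRadius γ) fun t ht => sectorRadius_nonneg hγ₀ ht.1.le,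
    integral_sectorRadius_pow hn hγ₀ hγ₁]

lemma unitBallVolume_eq_rpow (n : ℕ) :
    unitBallVolume n = π ^ ((n : ℝ) / 2) / Gamma (n / 2 + 1) := by
  rw [unitBallVolume, sqrt_pow_eq_rpow pi_pos.le]

lemma unitBallVolume_succ {n : ℕ} (hn : 0 < n) :
    unitBallVolume (n + 1) = unitBallVolume n * (n / (n + 1)) * incBeta 1 (n / 2) (1 / 2) := by
  have hΓ₀ := Gamma_add_one (s := n / 2) (by positivity)
  have hΓ₁ := Gamma_add_one (s := (n + 1) / 2) (by positivity)
  rw [unitBallVolume, unitBallVolume, incBeta_one (by positivity) (by norm_num), Gamma_one_half_eq,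
    show (n : ℝ) / 2 + 1 / 2 = (n + 1) / 2 by ring, Nat.cast_succ, hΓ₀, hΓ₁, pow_succ]
  field_simp

/-- Volume of the hyperspherical sector:
`Vol(C△_γ(w)) = (Vol(B)/2) · I_{1-γ²}((d-1)/2, 1/2)` with
`Vol(B) = π^(d/2) / Γ(d/2 + 1)`. -/
theorem volume_sector (d : ℕ) (hd : 2 ≤ d) (γ : ℝ) (hγ : γ ∈ Set.Ioo (0:ℝ) 1)
    (w : EuclideanSpace ℝ (Fin d)) (hw : w ≠ 0) :
    (MeasureTheory.volume (sector d γ w)).toReal =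
      Real.pi ^ ((d:ℝ) / 2) / Real.Gamma ((d:ℝ) / 2 + 1) / 2 *
        regIncBeta (1 - γ ^ 2) (((d:ℝ) - 1) / 2) (1 / 2) := by
  obtain ⟨hγ₀, hγ₁⟩ := hγ
  obtain ⟨n, rfl⟩ : ∃ n, d = n + 1 := ⟨d - 1, by omega⟩
  have hn : 0 < n := by omega
  have hB : 0 < incBeta 1 (n / 2) (1 / 2) := by
    rw [incBeta_one (by positivity) (by norm_num)]
    positivity
  have hx := incBeta_nonneg (x := 1 - γ ^ 2) (by nlinarith) (by nlinarith) (n / 2) (1 / 2)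
  have hκ : 0 < unitBallVolume n := by unfold unitBallVolume; positivity
  have he : (EuclideanSpace.single 0 1 : EuclideanSpace ℝ (Fin (n + 1))) ≠ 0 := by simp
  rw [volume_sector_eq_of_ne_zero γ hw he, volume_sector_single_zero hn hγ₀ hγ₁.le,
    ENNReal.toReal_ofReal (by positivity), ← unitBallVolume_eq_rpow, unitBallVolume_succ hn,
    regIncBeta, Nat.cast_succ, add_sub_cancel_right]
  field_simp
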